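/- Let 𝔄 be a strictly semi-transitive subalgebra of L(X), where X is a complex Banach space. If 𝔄 is transitive, then 𝔄 is dense in L(X) in the weak operator topology. -/

import Mathlib

/-!
Replace `𝔄` by its norm closure `𝔅`, which is still strictly semi-transitive and transitive and
has the same WOT closure. By Baire's theorem, strict semi-transitivity gives some `n` and an open
box of pairs `(y, z)` such that `z` is a limit of vectors `B y` with `B ∈ 𝔅`, `‖B‖ ≤ n`. Iterating
this approximation as in the proof of the open mapping theorem, every `y` in an open set has
orbit `𝔅 y = X`, and by transitivity every nonzero vector can be moved into that open set: `𝔅`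
is strictly transitive. Hence `X` is a simple module over the unital algebra generated by `𝔅`.
Its commutant consists of bounded operators (open mapping theorem), hence of scalars (nonempty
spectrum and Schur's lemma), so Jacobson's density theorem lets `𝔅` agree with any operator on
finitely many vectors, and elements of `𝔄` close in norm do the rest.
-/

open Metric Set Filter Topology

section Transitivity

variable {𝕜 X : Type*} [NontriviallyNormedField 𝕜] [NormedAddCommGroup X] [NormedSpace 𝕜 X]

def IsStrictlySemiTransitive (S : Set (X →L[𝕜] X)) : Prop :=
  ∀ x y : X, x ≠ 0 → y ≠ 0 → ∃ B ∈ S, B x = y ∨ B y = x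

def IsTransitive (S : Set (X →L[𝕜] X)) : Prop :=
  ∀ x : X, x ≠ 0 → Dense {y : X | ∃ B ∈ S, B x = y}

def IsStrictlyTransitive (S : Set (X →L[𝕜] X)) : Prop :=
  ∀ x : X, x ≠ 0 → ∀ v : X, ∃ B ∈ S, B x = v

theorem IsStrictlySemiTransitive.mono {S T : Set (X →L[𝕜] X)} (hS : IsStrictlySemiTransitive S)
    (hST : S ⊆ T) : IsStrictlySemiTransitive T := fun x y hx hy =>
  let ⟨B, hB, h⟩ := hS x y hx hy
  ⟨B, hST hB, h⟩

theorem IsTransitive.mono {S T : Set (X →L[𝕜] X)} (hS : IsTransitive S) (hST : S ⊆ T) :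
    IsTransitive T := fun x hx =>
  (hS x hx).mono <| by rintro _ ⟨B, hB, rfl⟩; exact ⟨B, hST hB, rfl⟩

end Transitivity

section OpenMapping

variable {𝕜 E F : Type*} [NontriviallyNormedField 𝕜] [NormedAddCommGroup E] [NormedSpace 𝕜 E]
  [NormedAddCommGroup F] [NormedSpace 𝕜 F]

theorem ContinuousLinearMap.surjective_of_exists_approx_preimage [CompleteSpace E]
    (f : E →L[𝕜] F) {C : ℝ} (hf : ∀ y, ∃ x, ‖f x - y‖ ≤ ‖y‖ / 2 ∧ ‖x‖ ≤ C * ‖y‖) :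
    Function.Surjective f := by
  choose g hg using hf
  intro y
  -- `h^[n] y` is what is left of `y` after `n` corrections
  set h : F → F := fun z => z - f (g z)
  have h_le : ∀ n, ‖h^[n] y‖ ≤ ‖y‖ * (1 / 2) ^ n := by
    intro n
    induction n with
    | zero => simp
    | succ n ih =>
      rw [Function.iterate_succ_apply', pow_succ, ← mul_assoc, norm_sub_rev]
      exact (hg _).1.trans (by linarith)
  set u : ℕ → E := fun n => g (h^[n] y)
  have hu : Summable u := by
    refine .of_norm_bounded (summable_geometric_two.mul_left (|C| * ‖y‖)) fun n => ?_
    calc ‖u n‖ ≤ C * ‖h^[n] y‖ := (hg _).2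
      _ ≤ |C| * (‖y‖ * (1 / 2) ^ n) :=
        mul_le_mul (le_abs_self C) (h_le n) (norm_nonneg _) (abs_nonneg C)
      _ = |C| * ‖y‖ * (1 / 2) ^ n := by ring
  have h_partial : ∀ n, f (∑ i ∈ Finset.range n, u i) = y - h^[n] y := by
    intro n
    induction n with
    | zero => simp
    | succ n ih =>
      rw [Finset.sum_range_succ, map_add, ih, Function.iterate_succ_apply']
      simp only [h, u]
      abel
  have h_tendsto : Tendsto (fun n => y - h^[n] y) atTop (𝓝 y) := by
    have : Tendsto (fun n => ‖y‖ * (1 / 2 : ℝ) ^ n) atTop (𝓝 0) := by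
      simpa using (tendsto_pow_atTop_nhds_zero_of_lt_one (r := (1 / 2 : ℝ)) (by norm_num)
        (by norm_num)).const_mul ‖y‖
    simpa using tendsto_const_nhds.sub (squeeze_zero_norm h_le this)
  refine ⟨∑' n, u n, tendsto_nhds_unique ?_ h_tendsto⟩
  simpa only [Function.comp_def, h_partial] using
    (f.continuous.tendsto _).comp hu.hasSum.tendsto_sum_nat

end OpenMapping

section RCLike

variable {𝕜 E F : Type*} [RCLike 𝕜] [NormedAddCommGroup E] [NormedSpace 𝕜 E]
  [NormedAddCommGroup F] [NormedSpace 𝕜 F]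

theorem ContinuousLinearMap.exists_approx_preimage_of_ball_subset_closure (f : E →L[𝕜] F)
    {r C : ℝ} (hr : 0 < r) (h : ball 0 r ⊆ closure (f '' closedBall 0 C)) (y : F) :
    ∃ x, ‖f x - y‖ ≤ ‖y‖ / 2 ∧ ‖x‖ ≤ 2 * C / r * ‖y‖ := by
  rcases eq_or_ne y 0 with rfl | hy
  · exact ⟨0, by simp⟩
  have hy' : 0 < ‖y‖ := norm_pos_iff.2 hy
  -- rescale `y` into `ball 0 r`, approximate there to within `r / 4`, and scale back
  set t : ℝ := r / (2 * ‖y‖)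
  have ht : 0 < t := by positivity
  have ht_inv : t⁻¹ = 2 * ‖y‖ / r := inv_div _ _
  have hty : (t : 𝕜) • y ∈ ball 0 r := by
    rw [mem_ball_zero_iff, norm_smul, RCLike.norm_of_nonneg ht.le, div_mul_eq_mul_div,
      div_lt_iff₀ (by positivity)]
    nlinarith
  obtain ⟨_, ⟨x, hx, rfl⟩, hfx⟩ := Metric.mem_closure_iff.1 (h hty) (r / 4) (by positivity)
  rw [mem_closedBall_zero_iff] at hx
  refine ⟨(t : 𝕜)⁻¹ • x, ?_, ?_⟩
  · have : f ((t : 𝕜)⁻¹ • x) - y = (t : 𝕜)⁻¹ • (f x - (t : 𝕜) • y) := by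
      rw [map_smul, smul_sub, inv_smul_smul₀ (by exact_mod_cast ht.ne')]
    rw [this, norm_smul, norm_inv, RCLike.norm_of_nonneg ht.le, ← dist_eq_norm, dist_comm]
    calc t⁻¹ * dist ((t : 𝕜) • y) (f x) ≤ t⁻¹ * (r / 4) := by gcongr
      _ = ‖y‖ / 2 := by rw [ht_inv]; field_simp; ring
  · rw [norm_smul, norm_inv, RCLike.norm_of_nonneg ht.le]
    calc t⁻¹ * ‖x‖ ≤ t⁻¹ * C := by gcongr
      _ = 2 * C / r * ‖y‖ := by rw [ht_inv]; ring

end RCLike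

section OrbitMap

variable {𝕜 X : Type*} [RCLike 𝕜] [NormedAddCommGroup X] [NormedSpace 𝕜 X]
  (S : Submodule 𝕜 (X →L[𝕜] X))

noncomputable def orbitMap (y : X) : S →L[𝕜] X :=
  (ContinuousLinearMap.apply 𝕜 X y).comp S.subtypeL

def boundedGraph (n : ℕ) : Set (X × X) := {p | ∃ B ∈ S, ‖B‖ ≤ n ∧ B p.1 = p.2}

variable {S}

theorem mem_closure_image_of_mem_closure_boundedGraph {n : ℕ} {y z : X}
    (h : (y, z) ∈ closure (boundedGraph S n)) :
    z ∈ closure (orbitMap S y '' closedBall 0 n) := by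
  rw [Metric.mem_closure_iff] at h ⊢
  intro ε hε
  obtain ⟨⟨y', _⟩, ⟨B, hB, hBn, rfl : B y' = _⟩, hdist⟩ := h (ε / (n + 1)) (by positivity)
  refine ⟨B y, ⟨⟨B, hB⟩, by simpa using hBn, rfl⟩, ?_⟩
  obtain ⟨hy', hz'⟩ : dist y y' < ε / (n + 1) ∧ dist z (B y') < ε / (n + 1) :=
    max_lt_iff.1 (by simpa [Prod.dist_eq] using hdist)
  calc dist z (B y) ≤ dist z (B y') + dist (B y') (B y) := dist_triangle _ _ _
    _ ≤ dist z (B y') + n * dist y' y := by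
        gcongr
        exact (B.lipschitz.dist_le_mul y' y).trans (by gcongr; simpa using hBn)
    _ < ε / (n + 1) + n * (ε / (n + 1)) := by
        rw [dist_comm y']
        exact add_lt_add_of_lt_of_le hz' (by gcongr)
    _ = ε := by field_simp; ring

theorem exists_ball_prod_subset_closure_boundedGraph [CompleteSpace X]
    (hS : IsStrictlySemiTransitive (S : Set (X →L[𝕜] X))) :
    ∃ (n : ℕ) (y₀ z₀ : X) (r : ℝ), 0 < r ∧
      ball y₀ r ×ˢ ball z₀ r ⊆ closure (boundedGraph S n) := by
  have h_cover : ∀ p : X × X, ∃ n, p ∈ boundedGraph S n ∨ p.swap ∈ boundedGraph S n := by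
    rintro ⟨y, z⟩
    rcases eq_or_ne y 0 with rfl | hy
    · exact ⟨0, .inr ⟨0, zero_mem _, by simp, by simp⟩⟩
    rcases eq_or_ne z 0 with rfl | hz
    · exact ⟨0, .inl ⟨0, zero_mem _, by simp, by simp⟩⟩
    obtain ⟨B, hB, h | h⟩ := hS y z hy hz
    exacts [⟨⌈‖B‖⌉₊, .inl ⟨B, hB, Nat.le_ceil _, h⟩⟩, ⟨⌈‖B‖⌉₊, .inr ⟨B, hB, Nat.le_ceil _, h⟩⟩]
  let F : ℕ ⊕ ℕ → Set (X × X) := Sum.elim (fun n => closure (boundedGraph S n))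
    (fun n => Prod.swap ⁻¹' closure (boundedGraph S n))
  have hF_closed : ∀ i, IsClosed (F i) := by
    rintro (n | n)
    exacts [isClosed_closure, isClosed_closure.preimage continuous_swap]
  have hF_cover : ⋃ i, F i = univ := by
    refine eq_univ_of_forall fun p => ?_
    obtain ⟨n, h | h⟩ := h_cover p
    exacts [mem_iUnion.2 ⟨.inl n, subset_closure h⟩, mem_iUnion.2 ⟨.inr n, subset_closure h⟩]
  obtain ⟨i, p, hp⟩ := nonempty_interior_of_iUnion_of_closed hF_closed hF_cover
  obtain ⟨r, hr, hball⟩ := Metric.isOpen_iff.1 isOpen_interior p hp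
  rcases i with n | n
  · refine ⟨n, p.1, p.2, r, hr, ?_⟩
    rw [ball_prod_same]
    exact hball.trans interior_subset
  · refine ⟨n, p.2, p.1, r, hr, fun q hq => ?_⟩
    have : q.swap ∈ ball p r := by
      rw [← ball_prod_same]
      exact ⟨hq.2, hq.1⟩
    simpa [F] using interior_subset (hball this)

theorem ball_subset_closure_orbitMap_image {n : ℕ} {y₀ z₀ y : X} {r : ℝ}
    (hbox : ball y₀ r ×ˢ ball z₀ r ⊆ closure (boundedGraph S n)) (hy : y ∈ ball y₀ r) :
    ball 0 r ⊆ closure (orbitMap S y '' closedBall 0 n) := by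
  intro u hu
  rw [mem_ball_zero_iff] at hu
  have h_mem : ∀ v : X, ‖v‖ < r → z₀ + v ∈ closure (orbitMap S y '' closedBall 0 n) :=
    fun v hv => mem_closure_image_of_mem_closure_boundedGraph
      (hbox ⟨hy, by simpa [dist_eq_norm] using hv⟩)
  -- `u` is half the difference of `z₀ + u` and `z₀ - u`, and the image of the ball is
  -- stable under half differences
  have h_half : (2⁻¹ : 𝕜) • ((z₀ + u) - (z₀ + -u)) = u := by
    rw [add_sub_add_left_eq_sub, sub_neg_eq_add, ← two_smul 𝕜, smul_smul,
      inv_mul_cancel₀ two_ne_zero, one_smul]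
  rw [← h_half]
  refine map_mem_closure₂ (f := fun a b : X => (2⁻¹ : 𝕜) • (a - b)) (by fun_prop)
    (h_mem u hu) (h_mem (-u) (by simpa using hu)) ?_
  rintro _ ⟨B₁, hB₁, rfl⟩ _ ⟨B₂, hB₂, rfl⟩
  refine ⟨(2⁻¹ : 𝕜) • (B₁ - B₂), ?_, by simp⟩
  rw [mem_closedBall_zero_iff] at hB₁ hB₂ ⊢
  change ‖(B₁ : X →L[𝕜] X)‖ ≤ n at hB₁
  change ‖(B₂ : X →L[𝕜] X)‖ ≤ n at hB₂
  change ‖(2⁻¹ : 𝕜) • ((B₁ : X →L[𝕜] X) - B₂)‖ ≤ n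
  rw [norm_smul, norm_inv, RCLike.norm_two]
  linarith [norm_sub_le (B₁ : X →L[𝕜] X) B₂]

theorem exists_isOpen_surjective_orbitMap [CompleteSpace X] [CompleteSpace S]
    (hS : IsStrictlySemiTransitive (S : Set (X →L[𝕜] X))) :
    ∃ U : Set X, IsOpen U ∧ U.Nonempty ∧ ∀ y ∈ U, Function.Surjective (orbitMap S y) := by
  obtain ⟨n, y₀, z₀, r, hr, hbox⟩ := exists_ball_prod_subset_closure_boundedGraph hS
  refine ⟨ball y₀ r, isOpen_ball, nonempty_ball.2 hr, fun y hy => ?_⟩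
  have h : ball 0 r ⊆ closure (orbitMap S y '' closedBall 0 n) :=
    ball_subset_closure_orbitMap_image hbox hy
  exact ContinuousLinearMap.surjective_of_exists_approx_preimage (𝕜 := 𝕜) (E := S) _
    (ContinuousLinearMap.exists_approx_preimage_of_ball_subset_closure (𝕜 := 𝕜) (E := S) _ hr h)

end OrbitMap

theorem NonUnitalSubalgebra.isStrictlyTransitive_of_isClosed {𝕜 X : Type*} [RCLike 𝕜]
    [NormedAddCommGroup X] [NormedSpace 𝕜 X] [CompleteSpace X]
    {𝔅 : NonUnitalSubalgebra 𝕜 (X →L[𝕜] X)} (h_closed : IsClosed (𝔅 : Set (X →L[𝕜] X)))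
    (hsst : IsStrictlySemiTransitive (𝔅 : Set (X →L[𝕜] X)))
    (htrans : IsTransitive (𝔅 : Set (X →L[𝕜] X))) :
    IsStrictlyTransitive (𝔅 : Set (X →L[𝕜] X)) := by
  intro x hx v
  have : CompleteSpace 𝔅.toSubmodule := h_closed.completeSpace_coe
  obtain ⟨U, hU, hU_ne, hU_surj⟩ := exists_isOpen_surjective_orbitMap (S := 𝔅.toSubmodule) hsst
  obtain ⟨_, ⟨A, hA, rfl⟩, hAx⟩ := (htrans x hx).exists_mem_open hU hU_ne
  obtain ⟨⟨B, hB⟩, hBv⟩ := hU_surj _ hAx v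
  exact ⟨B * A, mul_mem hB hA, hBv⟩

instance ContinuousLinearMap.apply_isScalarTower {𝕜 E : Type*} [NormedField 𝕜]
    [NormedAddCommGroup E] [NormedSpace 𝕜 E] : IsScalarTower 𝕜 (E →L[𝕜] E) E :=
  ⟨fun _ _ _ => rfl⟩

theorem NonUnitalSubalgebra.mul_mem_of_mem_adjoin {R A : Type*} [CommSemiring R] [Semiring A]
    [Algebra R A] (s : NonUnitalSubalgebra R A) {a b : A} (ha : a ∈ Algebra.adjoin R (s : Set A))
    (hb : b ∈ s) : a * b ∈ s := by
  induction ha using Algebra.adjoin_induction generalizing b with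
  | mem x hx => exact mul_mem hx hb
  | algebraMap c => simpa [Algebra.algebraMap_eq_smul_one] using s.smul_mem c hb
  | add x y _ _ hx hy => simpa [add_mul] using add_mem (hx hb) (hy hb)
  | mul x y _ _ hx hy => simpa [mul_assoc] using hx (hy hb)

def NonUnitalSubalgebra.toIdealAdjoin {R A : Type*} [CommSemiring R] [Semiring A] [Algebra R A]
    (s : NonUnitalSubalgebra R A) : Ideal (Algebra.adjoin R (s : Set A)) where
  carrier := {a | (a : A) ∈ s}
  add_mem' ha hb := s.add_mem ha hb
  zero_mem' := zero_mem s
  smul_mem' r _ ha := s.mul_mem_of_mem_adjoin r.2 ha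

theorem IsSemisimpleModule.exists_mem_smul_eq_self {R M : Type*} [Ring R] [AddCommGroup M]
    [Module R M] [IsSemisimpleModule R M] (I : Ideal R)
    (hI : ∀ m : M, (∀ a ∈ I, a • m = 0) → m = 0) (v : M) : ∃ a ∈ I, a • v = v := by
  let p : Submodule R M := Submodule.map (LinearMap.toSpanSingleton R M v) I
  obtain ⟨q, hpq⟩ := exists_isCompl p
  obtain ⟨_, ⟨a, ha, rfl⟩, n, hn, hv⟩ :=
    Submodule.mem_sup.1 (hpq.sup_eq_top ▸ Submodule.mem_top : v ∈ p ⊔ q)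
  -- the `q`-component `n = v - a • v` of `v` is killed by `I`, since `b • n ∈ p ⊓ q`
  suffices n = 0 by exact ⟨a, ha, by simpa [this] using hv⟩
  refine hI n fun b hb => Submodule.disjoint_def.1 hpq.disjoint _ ?_ (q.smul_mem b hn)
  rw [eq_sub_of_add_eq' hv, LinearMap.toSpanSingleton_apply, smul_sub, ← mul_smul, ← sub_smul]
  exact ⟨b - b * a, I.sub_mem hb (I.smul_mem b ha), rfl⟩

theorem isSimpleModule_adjoin_of_isStrictlyTransitive {𝕜 X : Type*} [NontriviallyNormedField 𝕜]
    [NormedAddCommGroup X] [NormedSpace 𝕜 X] [Nontrivial X] {𝔅 : NonUnitalSubalgebra 𝕜 (X →L[𝕜] X)}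
    (htr : IsStrictlyTransitive (𝔅 : Set (X →L[𝕜] X))) :
    IsSimpleModule (Algebra.adjoin 𝕜 (𝔅 : Set (X →L[𝕜] X))) X :=
  isSimpleModule_iff_toSpanSingleton_surjective.2 ⟨inferInstance, fun x hx v =>
    let ⟨B, hB, hBx⟩ := htr x hx v
    ⟨⟨B, Algebra.subset_adjoin hB⟩, hBx⟩⟩

section Complex

variable {X : Type*} [NormedAddCommGroup X] [NormedSpace ℂ X] [CompleteSpace X]
  {𝔅 : NonUnitalSubalgebra ℂ (X →L[ℂ] X)}

theorem exists_forall_eq_smul_of_isStrictlyTransitive (h_closed : IsClosed (𝔅 : Set (X →L[ℂ] X)))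
    (htr : IsStrictlyTransitive (𝔅 : Set (X →L[ℂ] X)))
    (f : Module.End (Algebra.adjoin ℂ (𝔅 : Set (X →L[ℂ] X))) X) : ∃ c : ℂ, ∀ v, f v = c • v := by
  rcases subsingleton_or_nontrivial X with hX | hX
  · exact ⟨0, fun v => Subsingleton.elim _ _⟩
  have := isSimpleModule_adjoin_of_isStrictlyTransitive htr
  have : CompleteSpace 𝔅.toSubmodule := h_closed.completeSpace_coe
  have hf_comm : ∀ B ∈ 𝔅, ∀ v, f (B v) = B (f v) := fun B hB v =>
    f.map_smul ⟨B, Algebra.subset_adjoin hB⟩ v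
  obtain ⟨y₀, hy₀⟩ := exists_ne (0 : X)
  -- `f` is bounded because `f (B y₀) = B (f y₀)` and `B` can be chosen with `‖B‖ ≤ C ‖B y₀‖`
  have h_surj : Function.Surjective (orbitMap 𝔅.toSubmodule y₀) := fun v =>
    let ⟨B, hB, hBv⟩ := htr y₀ hy₀ v
    ⟨⟨B, hB⟩, hBv⟩
  obtain ⟨C, -, hC⟩ := ContinuousLinearMap.exists_preimage_norm_le (𝕜 := ℂ) (𝕜' := ℂ)
    (E := 𝔅.toSubmodule) (F := X) _ h_surj
  have hf_bound : ∀ v, ‖f v‖ ≤ C * ‖f y₀‖ * ‖v‖ := by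
    intro v
    obtain ⟨⟨B, hB⟩, rfl, hBn⟩ := hC v
    calc ‖f (B y₀)‖ = ‖B (f y₀)‖ := by rw [hf_comm B hB]
      _ ≤ ‖B‖ * ‖f y₀‖ := B.le_opNorm _
      _ ≤ C * ‖B y₀‖ * ‖f y₀‖ := by gcongr; exact hBn
      _ = C * ‖f y₀‖ * ‖B y₀‖ := by ring
  obtain ⟨c, hc⟩ := spectrum.nonempty ((f.restrictScalars ℂ).mkContinuous _ hf_bound)
  -- by Schur's lemma `c - f` is zero or bijective, and it is not invertible
  rcases LinearMap.bijective_or_eq_zero (c • LinearMap.id - f) with h | h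
  · exact absurd (ContinuousLinearMap.isUnit_iff_bijective.2 h) hc
  · exact ⟨c, fun v => (sub_eq_zero.1 (LinearMap.congr_fun h v)).symm⟩

theorem exists_mem_forall_apply_eq_of_isStrictlyTransitive
    (h_closed : IsClosed (𝔅 : Set (X →L[ℂ] X))) (htr : IsStrictlyTransitive (𝔅 : Set (X →L[ℂ] X)))
    (T : X →ₗ[ℂ] X) {ι : Type*} [Finite ι] (x : ι → X) :
    ∃ B ∈ 𝔅, ∀ i, B (x i) = T (x i) := by
  classical
  rcases subsingleton_or_nontrivial X with hX | hX
  · exact ⟨0, zero_mem _, fun i => Subsingleton.elim _ _⟩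
  have := Fintype.ofFinite ι
  have := isSimpleModule_adjoin_of_isStrictlyTransitive htr
  -- the commutant of `𝔅` consists of scalars, so `T` lies in the bicommutant
  let T' : Module.End (Module.End (Algebra.adjoin ℂ (𝔅 : Set (X →L[ℂ] X))) X) X :=
    { toFun := T
      map_add' := T.map_add
      map_smul' := fun f v => by
        obtain ⟨c, hc⟩ := exists_forall_eq_smul_of_isStrictlyTransitive h_closed htr f
        simp [Module.End.smul_def, hc] }
  obtain ⟨r, hr⟩ := jacobson_density T' (Finset.univ.image x)
  -- `r` lies in the unital algebra only, so compose it with an element of `𝔅` fixing all `x i`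
  have hI : ∀ w : ι → X, (∀ a ∈ 𝔅.toIdealAdjoin, a • w = 0) → w = 0 := by
    intro w hw
    funext k
    by_contra hk
    obtain ⟨v, hv⟩ := exists_ne (0 : X)
    obtain ⟨B, hB, hBw⟩ := htr (w k) hk v
    exact hv (hBw ▸ congr_fun (hw ⟨B, Algebra.subset_adjoin hB⟩ hB) k)
  obtain ⟨e, he, hex⟩ := IsSemisimpleModule.exists_mem_smul_eq_self _ hI x
  refine ⟨r * e, 𝔅.mul_mem_of_mem_adjoin r.2 he, fun i => ?_⟩
  change (r * e) • x i = T (x i)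
  rw [mul_smul, show e • x i = x i from congr_fun hex i]
  exact (hr _ (Finset.mem_image_of_mem x (Finset.mem_univ i))).symm

end Complex

theorem ContinuousLinearMap.exists_mem_forall_norm_lt_of_mem_closure {𝕜 X ι : Type*}
    [NontriviallyNormedField 𝕜] [NormedAddCommGroup X] [NormedSpace 𝕜 X] [Finite ι]
    {S : Set (X →L[𝕜] X)} {B : X →L[𝕜] X} (hB : B ∈ closure S) (x : ι → X)
    (f : ι → X →L[𝕜] 𝕜) {ε : ℝ} (hε : 0 < ε) :
    ∃ A ∈ S, ∀ i, ‖f i (B (x i) - A (x i))‖ < ε := by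
  have h_near : ∀ᶠ A in 𝓝 B, ∀ i, ‖f i (B (x i) - A (x i))‖ < ε :=
    eventually_all.2 fun i =>
      (show Continuous fun A : X →L[𝕜] X => ‖f i (B (x i) - A (x i))‖ by fun_prop).continuousAt
        |>.eventually_lt continuousAt_const (by simpa using hε)
  obtain ⟨A, hA, hAS⟩ := mem_closure_iff_nhds.1 hB _ h_near
  exact ⟨A, hAS, hA⟩

/-- Let `𝔄` be a strictly semi-transitive subalgebra of `L(X)`, `X` a complex Banach
space.  If `𝔄` is transitive, then `𝔄` is WOT-dense in `L(X)`. -/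
theorem stmt_12 {X : Type*} [NormedAddCommGroup X] [NormedSpace ℂ X] [CompleteSpace X]
    (𝔄 : NonUnitalSubalgebra ℂ (X →L[ℂ] X))
    (hsst : ∀ x y : X, x ≠ 0 → y ≠ 0 → ∃ A ∈ 𝔄, A x = y ∨ A y = x)
    (htrans : ∀ x : X, x ≠ 0 → Dense {y : X | ∃ A ∈ 𝔄, A x = y}) :
    ∀ (T : X →L[ℂ] X) (ε : ℝ), 0 < ε →
      ∀ (m : ℕ) (x : Fin m → X) (f : Fin m → (X →L[ℂ] ℂ)),
        ∃ A ∈ 𝔄, ∀ i, ‖f i (T (x i) - A (x i))‖ < ε := by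
  intro T ε hε m x f
  have h_le : (𝔄 : Set (X →L[ℂ] X)) ⊆ 𝔄.topologicalClosure := 𝔄.le_topologicalClosure
  have h_closed := 𝔄.isClosed_topologicalClosure
  have h_strict := 𝔄.topologicalClosure.isStrictlyTransitive_of_isClosed h_closed
    (IsStrictlySemiTransitive.mono hsst h_le) (IsTransitive.mono htrans h_le)
  obtain ⟨B, hB, hBT⟩ := exists_mem_forall_apply_eq_of_isStrictlyTransitive h_closed h_strict T x
  obtain ⟨A, hA, hAB⟩ :=
    ContinuousLinearMap.exists_mem_forall_norm_lt_of_mem_closure (S := 𝔄) hB x f hε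
  exact ⟨A, hA, fun i => by simpa [hBT i] using hAB i⟩
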